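/- The semantics of every GKAT expression satisfies the determinacy property: if two guarded strings x, y ∈ ⟦e⟧ agree on their first n atoms, then they agree on their first n actions (or lack thereof). -/
import Mathlib


/-- A guarded string over actions `S` and atoms `A`: an initial atom followed by a
list of (action, atom) pairs, representing `α₀p₁α₁⋯pₙαₙ`. -/
abbrev GS (S A : Type*) := A × List (S × A)

variable {S A : Type*}

/-- The last atom of a guarded string. -/
def lastAtom (x : GS S A) : A := ((x.2.map Prod.snd).getLast?).getD x.1

/-- Fusion product of languages of guarded strings:
`(xα) ⋄ (βy) = xαy` when `α = β`, undefined otherwise. -/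
def fprod (L K : Set (GS S A)) : Set (GS S A) :=
  {z | ∃ x ∈ L, ∃ y ∈ K, lastAtom x = y.1 ∧ z = (x.1, x.2 ++ y.2)}

/-- A set of atoms viewed as the language of single-atom guarded strings. -/
def atomsL (B : Set A) : Set (GS S A) := {x | x.1 ∈ B ∧ x.2 = []}

/-- Powers of a language with respect to the fusion product: `L⁰ = At`, `L^{n+1} = Lⁿ ⋄ L`. -/
def fpow (L : Set (GS S A)) : ℕ → Set (GS S A)
  | 0 => atomsL Set.univ
  | n + 1 => fprod (fpow L n) L

/-- Guarded union: `L +_B K = (B ⋄ L) ∪ (B̄ ⋄ K)`. -/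
def gunion (L K : Set (GS S A)) (B : Set A) : Set (GS S A) :=
  fprod (atomsL B) L ∪ fprod (atomsL Bᶜ) K

/-- Guarded iteration: `L^(B) = ⋃_{n≥0} (B ⋄ L)ⁿ ⋄ B̄`. -/
def gloop (L : Set (GS S A)) (B : Set A) : Set (GS S A) :=
  ⋃ n : ℕ, fprod (fpow (fprod (atomsL B) L) n) (atomsL Bᶜ)

/-- Boolean expressions over primitive tests `T`. -/
inductive BExp (T : Type*) where
  | zero : BExp T
  | one : BExp T
  | tst (t : T) : BExp T
  | and (b c : BExp T) : BExp T
  | or (b c : BExp T) : BExp T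
  | not (b : BExp T) : BExp T

/-- An atom: a complete truth assignment over the primitive tests. -/
abbrev Atom (T : Type*) := T → Bool

/-- Evaluation of a Boolean expression at an atom. -/
def BExp.eval {T : Type*} (α : Atom T) : BExp T → Bool
  | .zero => false
  | .one => true
  | .tst t => α t
  | .and b c => b.eval α && c.eval α
  | .or b c => b.eval α || c.eval α
  | .not b => !(b.eval α)

/-- The set of atoms satisfying a Boolean expression. -/
def bsem {T : Type*} (b : BExp T) : Set (Atom T) := {α | b.eval α = true}

/-- GKAT expressions over actions `S` and primitive tests `T`. -/
inductive Exp (S T : Type*) where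
  | act (p : S) : Exp S T
  | bexp (b : BExp T) : Exp S T
  | seq (e f : Exp S T) : Exp S T
  | ite (b : BExp T) (e f : Exp S T) : Exp S T
  | whle (b : BExp T) (e : Exp S T) : Exp S T

/-- Language semantics of GKAT expressions. -/
def sem {S T : Type*} : Exp S T → Set (GS S (Atom T))
  | .act p => {x | ∃ α β, x = (α, [(p, β)])}
  | .bexp b => atomsL (bsem b)
  | .seq e f => fprod (sem e) (sem f)
  | .ite b e f => gunion (sem e) (sem f) (bsem b)
  | .whle b e => gloop (sem e) (bsem b)

/-- The sequence of atoms of a guarded string. -/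
def atomsOf {S A : Type*} (x : GS S A) : List A := x.1 :: x.2.map Prod.snd

/-- The sequence of actions of a guarded string. -/
def actionsOf {S A : Type*} (x : GS S A) : List S := x.2.map Prod.fst

/-- The determinacy property: strings agreeing on their first `n` atoms agree
on their first `n` actions (or lack thereof). -/
def Deterministic {S A : Type*} (L : Set (GS S A)) : Prop :=
  ∀ x ∈ L, ∀ y ∈ L, ∀ n : ℕ,
    (atomsOf x).take n = (atomsOf y).take n →
    (actionsOf x).take n = (actionsOf y).take n

/-- The termination test `E(e)` of a GKAT expression. -/
def Ef {S T : Type*} : Exp S T → BExp T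
  | .act _ => .zero
  | .bexp b => b
  | .seq e f => .and (Ef e) (Ef f)
  | .ite b e f => .or (.and b (Ef e)) (.and (.not b) (Ef f))
  | .whle b _ => .not b

section AuxDet

variable {S A : Type*}

/-- Cross-language determinacy. -/
def DetPair (L K : Set (GS S A)) : Prop :=
  ∀ x ∈ L, ∀ y ∈ K, ∀ n : ℕ,
    (atomsOf x).take n = (atomsOf y).take n →
    (actionsOf x).take n = (actionsOf y).take n

lemma det_mono {L K : Set (GS S A)} (h : K ⊆ L) (hL : Deterministic L) :
    Deterministic K := fun x hx y hy => hL x (h hx) y (h hy)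

lemma lastAtom_cons (α : A) (c : S × A) (t : List (S × A)) :
    lastAtom (α, c :: t) = lastAtom (c.2, t) := by
  simp [lastAtom, List.getLast?_cons]

lemma lastAtom_append (w : GS S A) (α : A) (l : List (S × A))
    (h : w.1 = lastAtom (α, l)) :
    lastAtom (α, l ++ w.2) = lastAtom w := by
  induction l generalizing α with
  | nil => simp [lastAtom] at h; subst h; rfl
  | cons c t ih =>
    rw [List.cons_append, lastAtom_cons]
    exact ih c.2 (by rwa [lastAtom_cons] at h)

lemma atomsOf_append (α : A) (l l' : List (S × A)) :
    atomsOf (α, l ++ l') = atomsOf (α, l) ++ l'.map Prod.snd := by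
  simp [atomsOf]

lemma atomsOf_length (x : GS S A) : (atomsOf x).length = x.2.length + 1 := by
  simp [atomsOf]

lemma drop_atomsOf (w : GS S A) (α : A) (l : List (S × A))
    (h : w.1 = lastAtom (α, l)) :
    (atomsOf (α, l ++ w.2)).drop l.length = atomsOf w := by
  induction l generalizing α with
  | nil =>
    simp [lastAtom] at h
    simp [atomsOf, ← h]
  | cons c t ih =>
    rw [lastAtom_cons] at h
    have := ih c.2 h
    simpa [atomsOf] using this

lemma detPair_fprod {M L K : Set (GS S A)} (hM : Deterministic M)
    (h : DetPair L K) : DetPair (fprod M L) (fprod M K) := by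
  rintro z ⟨u, hu, x, hx, hux, rfl⟩ z' ⟨v, hv, y, hy, hvy, rfl⟩ n hat
  set k := u.2.length with hk
  set k' := v.2.length with hk'
  rw [atomsOf_append, atomsOf_append] at hat
  set j := min n (min (k + 1) (k' + 1)) with hj
  have hku : (atomsOf u).length = k + 1 := atomsOf_length u
  have hkv : (atomsOf v).length = k' + 1 := atomsOf_length v
  have key : (atomsOf u).take j = (atomsOf v).take j := by
    have h1 : (atomsOf u).take j =
        ((atomsOf u ++ x.2.map Prod.snd).take n).take j := by
      rw [List.take_take, List.take_append_of_le_length (by omega)]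
      congr 1; omega
    have h2 : (atomsOf v).take j =
        ((atomsOf v ++ y.2.map Prod.snd).take n).take j := by
      rw [List.take_take, List.take_append_of_le_length (by omega)]
      congr 1; omega
    rw [h1, h2, hat]
  have hact := hM u hu v hv j key
  have hlu : (actionsOf u).length = k := by simp [actionsOf, hk]
  have hlv : (actionsOf v).length = k' := by simp [actionsOf, hk']
  have hlen : min j k = min j k' := by
    have := congrArg List.length hact
    simpa [List.length_take, hlu, hlv] using this
  have hgoal : actionsOf (u.1, u.2 ++ x.2) = actionsOf u ++ actionsOf x := by
    simp [actionsOf]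
  have hgoal' : actionsOf (v.1, v.2 ++ y.2) = actionsOf v ++ actionsOf y := by
    simp [actionsOf]
  by_cases hn : n ≤ k ∧ n ≤ k'
  · have hjn : j = n := by omega
    rw [hgoal, hgoal', List.take_append_of_le_length (by omega),
      List.take_append_of_le_length (by omega)]
    rw [hjn] at hact; exact hact
  · have hkk : k = k' := by omega
    have hkn : k < n := by omega
    have hjk : j = k + 1 := by omega
    have huv : actionsOf u = actionsOf v := by
      rw [hjk] at hact
      rwa [List.take_of_length_le (by omega), List.take_of_length_le (by omega)]
        at hact
    have hdx : atomsOf x = (atomsOf u ++ x.2.map Prod.snd).drop k := by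
      rw [← atomsOf_append]
      exact (drop_atomsOf x u.1 u.2 hux.symm).symm
    have hdy : atomsOf y = (atomsOf v ++ y.2.map Prod.snd).drop k := by
      rw [← atomsOf_append, hkk]
      exact (drop_atomsOf y v.1 v.2 hvy.symm).symm
    have htail : (atomsOf x).take (n - k) = (atomsOf y).take (n - k) := by
      rw [hdx, hdy, ← List.drop_take, ← List.drop_take, hat]
    have htact := h x hx y hy (n - k) htail
    rw [hgoal, hgoal', List.take_append,
      List.take_append, huv, hlv, ← hkk, htact]

lemma fprod_assoc (L K J : Set (GS S A)) :
    fprod (fprod L K) J = fprod L (fprod K J) := by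
  ext z
  constructor
  · rintro ⟨w, ⟨x, hx, y, hy, hxy, rfl⟩, j, hj, hwj, rfl⟩
    rw [lastAtom_append y x.1 x.2 hxy.symm] at hwj
    exact ⟨x, hx, (y.1, y.2 ++ j.2), ⟨y, hy, j, hj, hwj, rfl⟩, hxy,
      by simp⟩
  · rintro ⟨x, hx, w, ⟨y, hy, j, hj, hyj, rfl⟩, hxw, rfl⟩
    refine ⟨(x.1, x.2 ++ y.2), ⟨x, hx, y, hy, hxw, rfl⟩, j, hj, ?_, by simp⟩
    rwa [lastAtom_append y x.1 x.2 hxw.symm]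

lemma fprod_univ_left (L : Set (GS S A)) : fprod (atomsL Set.univ) L = L := by
  ext z
  constructor
  · rintro ⟨u, ⟨-, hu2⟩, y, hy, h1, rfl⟩
    have hlast : lastAtom u = u.1 := by simp [lastAtom, hu2]
    rw [hlast] at h1
    have hz : (u.1, u.2 ++ y.2) = y := by rw [hu2, h1]; simp
    rw [hz]; exact hy
  · intro hz
    exact ⟨(z.1, []), ⟨trivial, rfl⟩, z, hz, by simp [lastAtom], by simp⟩

lemma fprod_univ_right (L : Set (GS S A)) : fprod L (atomsL Set.univ) = L := by
  ext z
  constructor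
  · rintro ⟨x, hx, y, ⟨-, hy2⟩, h1, rfl⟩
    simpa [hy2] using hx
  · intro hz
    exact ⟨z, hz, (lastAtom z, []), ⟨trivial, rfl⟩, rfl, by simp⟩

lemma fprod_atomsL_left (B : Set A) (L : Set (GS S A)) :
    fprod (atomsL B) L = {z | z ∈ L ∧ z.1 ∈ B} := by
  ext z
  constructor
  · rintro ⟨u, ⟨hu1, hu2⟩, y, hy, h1, rfl⟩
    have : lastAtom u = u.1 := by simp [lastAtom, hu2]
    rw [this] at h1
    have hz : (u.1, u.2 ++ y.2) = y := by rw [hu2, h1]; simp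
    exact ⟨by rw [hz]; exact hy, hu1⟩
  · rintro ⟨hz, hz1⟩
    exact ⟨(z.1, []), ⟨hz1, rfl⟩, z, hz, by simp [lastAtom], by simp⟩

lemma fpow_succ' (M : Set (GS S A)) (n : ℕ) :
    fpow M (n + 1) = fprod M (fpow M n) := by
  induction n with
  | zero =>
    show fprod (atomsL Set.univ) M = fprod M (fpow M 0)
    show fprod (atomsL Set.univ) M = fprod M (atomsL Set.univ)
    rw [fprod_univ_left, fprod_univ_right]
  | succ n ih =>
    show fprod (fpow M (n + 1)) M = _
    rw [ih, fprod_assoc, ← ih]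
    rfl

lemma det_atomsL (B : Set A) : Deterministic (atomsL (S := S) B) := by
  rintro ⟨α, l⟩ ⟨-, hl⟩ ⟨β, m⟩ ⟨-, hm⟩ n -
  simp only at hl hm
  subst hl; subst hm; rfl

lemma head_eq_of_take {x y : GS S A} {n : ℕ}
    (h : (atomsOf x).take (n + 1) = (atomsOf y).take (n + 1)) : x.1 = y.1 := by
  simp [atomsOf, List.take_succ_cons] at h
  exact h.1

lemma det_gunion {L K : Set (GS S A)} {B : Set A}
    (hL : Deterministic L) (hK : Deterministic K) :
    Deterministic (gunion L K B) := by
  intro x hx y hy n hat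
  rw [gunion, fprod_atomsL_left, fprod_atomsL_left] at hx hy
  match n with
  | 0 => rfl
  | n + 1 =>
    have hhead := head_eq_of_take hat
    rcases hx with ⟨hx, hxB⟩ | ⟨hx, hxB⟩ <;> rcases hy with ⟨hy, hyB⟩ | ⟨hy, hyB⟩
    · exact hL x hx y hy _ hat
    · exact absurd (hhead ▸ hxB) hyB
    · exact absurd (hhead ▸ hyB) hxB
    · exact hK x hx y hy _ hat

lemma detPair_loop {L : Set (GS S A)} {B : Set A} (hL : Deterministic L) :
    ∀ m m', DetPair (fprod (fpow (fprod (atomsL B) L) m) (atomsL Bᶜ))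
      (fprod (fpow (fprod (atomsL B) L) m') (atomsL Bᶜ)) := by
  set M := fprod (atomsL B) L with hMdef
  have hM : Deterministic M := by
    refine det_mono ?_ hL
    rw [hMdef, fprod_atomsL_left]; exact fun z hz => hz.1
  have hMhead : ∀ z ∈ M, z.1 ∈ B := by
    intro z hz; rw [hMdef, fprod_atomsL_left] at hz; exact hz.2
  have base : fprod (fpow M 0) (atomsL (S := S) Bᶜ) = atomsL Bᶜ := by
    show fprod (atomsL Set.univ) _ = _
    rw [fprod_univ_left]
  have step : ∀ m, fprod (fpow M (m + 1)) (atomsL (S := S) Bᶜ) =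
      fprod M (fprod (fpow M m) (atomsL Bᶜ)) := by
    intro m; rw [fpow_succ', fprod_assoc]
  have main : ∀ s m m', m + m' ≤ s →
      DetPair (fprod (fpow M m) (atomsL Bᶜ)) (fprod (fpow M m') (atomsL Bᶜ)) := by
    intro s
    induction s with
    | zero =>
      intro m m' hs
      obtain ⟨rfl, rfl⟩ : m = 0 ∧ m' = 0 := by omega
      rw [base]
      exact fun x hx y hy n h => det_atomsL Bᶜ x hx y hy n h
    | succ s ih =>
      intro m m' hs
      match m, m' with
      | 0, 0 =>
        rw [base]
        exact fun x hx y hy n h => det_atomsL Bᶜ x hx y hy n h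
      | 0, m' + 1 =>
        rw [base, step]
        rintro x ⟨hx1, hx2⟩ y ⟨v, hv, w, hw, hvw, rfl⟩ n hat
        match n with
        | 0 => rfl
        | n + 1 =>
          have hhead := head_eq_of_take hat
          exact absurd (hhead ▸ hMhead v hv) hx1
      | m + 1, 0 =>
        rw [base, step]
        rintro x ⟨v, hv, w, hw, hvw, rfl⟩ y ⟨hy1, hy2⟩ n hat
        match n with
        | 0 => rfl
        | n + 1 =>
          have hhead := head_eq_of_take hat
          exact absurd (hhead ▸ hMhead v hv) (by simpa using hy1)
      | m + 1, m' + 1 =>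
        rw [step, step]
        exact detPair_fprod hM (ih m m' (by omega))
  exact fun m m' => main (m + m') m m' le_rfl

lemma det_gloop {L : Set (GS S A)} {B : Set A} (hL : Deterministic L) :
    Deterministic (gloop L B) := by
  intro x hx y hy
  simp only [gloop, Set.mem_iUnion] at hx hy
  obtain ⟨m, hx⟩ := hx
  obtain ⟨m', hy⟩ := hy
  exact detPair_loop hL m m' x hx y hy

end AuxDet

theorem sem_deterministic {S T : Type*} [Fintype S] [Fintype T] [Nonempty S] [Nonempty T]
    (e : Exp S T) : Deterministic (sem e) := by
  induction e with
  | act p =>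
    rintro x ⟨α, β, rfl⟩ y ⟨γ, δ, rfl⟩ n h
    rfl
  | bexp b => exact det_atomsL _
  | seq e f ihe ihf => exact detPair_fprod ihe ihf
  | ite b e f ihe ihf => exact det_gunion ihe ihf
  | whle b e ih => exact det_gloop ih
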